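/- Let A be a Z[X^{±}]-module and G = A ⋊ Z. For any f1, ..., fn, f0 in A, setting hi = (fi, 0), the product (0, b1)·h1·(0, b2)·h2···(0, bn)·hn·(0, b_{n+1}) equals (f0, 0) for some integers b1, ..., b_{n+1} if and only if there exist integers z1, ..., zn with X^{z1}·f1 + ··· + X^{zn}·fn = f0. -/

import Mathlib

open LaurentPolynomial

local notation "𝕋" => T (R := ℤ)

abbrev SDP (A : Type*) [AddCommGroup A] [Module (LaurentPolynomial ℤ) A] : Type _ := A × ℤ

variable {A : Type*} [AddCommGroup A] [Module (LaurentPolynomial ℤ) A]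

noncomputable instance : Group (SDP A) where
  mul p q := (p.1 + 𝕋 p.2 • q.1, p.2 + q.2)
  one := ((0 : A), (0 : ℤ))
  inv p := (-(𝕋 (-p.2) • p.1), -p.2)
  mul_assoc p q r := by
    refine Prod.ext ?_ ?_
    · show p.1 + 𝕋 p.2 • q.1 + 𝕋 (p.2 + q.2) • r.1
        = p.1 + 𝕋 p.2 • (q.1 + 𝕋 q.2 • r.1)
      rw [T_add, mul_smul, smul_add, add_assoc]
    · show p.2 + q.2 + r.2 = p.2 + (q.2 + r.2)
      ring
  one_mul p := by
    refine Prod.ext ?_ ?_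
    · show (0 : A) + 𝕋 (0:ℤ) • p.1 = p.1
      rw [T_zero, one_smul, zero_add]
    · show (0 : ℤ) + p.2 = p.2
      ring
  mul_one p := by
    refine Prod.ext ?_ ?_
    · show p.1 + 𝕋 p.2 • (0 : A) = p.1
      rw [smul_zero, add_zero]
    · show p.2 + (0:ℤ) = p.2
      ring
  inv_mul_cancel p := by
    refine Prod.ext ?_ ?_
    · show -(𝕋 (-p.2) • p.1) + 𝕋 (-p.2) • p.1 = (0 : A)
      rw [neg_add_cancel]
    · show -p.2 + p.2 = (0:ℤ)
      ring

lemma SDP.mul_def (p q : SDP A) :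
    p * q = ((p.1 + 𝕋 p.2 • q.1, p.2 + q.2) : SDP A) := rfl

lemma T_smul_T (a b : ℤ) (x : A) : 𝕋 a • 𝕋 b • x = 𝕋 (a + b) • x := by
  rw [smul_smul, ← T_add]

lemma key : ∀ (n : ℕ) (f : Fin n → A) (g : A) (c : ℤ),
    (∃ b : Fin (n + 1) → ℤ,
      (List.ofFn fun i : Fin n =>
          (((0 : A), b i.castSucc) : SDP A) * ((f i, 0) : SDP A)).prod
        * (((0 : A), b (Fin.last n)) : SDP A) = ((g, c) : SDP A))
    ↔ ∃ z : Fin n → ℤ, ∑ i, 𝕋 (z i) • f i = g := by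
  intro n
  induction n with
  | zero =>
    intro f g c
    simp only [List.ofFn_zero, List.prod_nil, one_mul, Finset.univ_eq_empty,
      Finset.sum_empty]
    constructor
    · rintro ⟨b, hb⟩
      have := congrArg Prod.fst hb
      exact ⟨fun i => 0, this⟩
    · rintro ⟨z, hz⟩
      exact ⟨fun _ => c, Prod.ext hz rfl⟩
  | succ n ih =>
    intro f g c
    constructor
    · rintro ⟨b, hb⟩
      -- peel off the head of the product
      rw [List.ofFn_succ, List.prod_cons, mul_assoc] at hb
      set b' : Fin (n + 1) → ℤ := fun i => b i.succ with hb'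
      have htail :
          (List.ofFn fun i : Fin n =>
              (((0 : A), b' i.castSucc) : SDP A) * ((f i.succ, 0) : SDP A)).prod
            * (((0 : A), b' (Fin.last n)) : SDP A)
          = ((𝕋 (-b 0) • g - f 0, c - b 0) : SDP A) := by
        set T := (List.ofFn fun i : Fin (n + 1 - 1) =>
            (((0 : A), b i.succ.castSucc) : SDP A) * ((f i.succ, 0) : SDP A)).prod
          * (((0 : A), b (Fin.last (n + 1))) : SDP A) with hT
        have h1 : (((0 : A), b (0 : Fin (n + 1)).castSucc) : SDP A)
            * ((f 0, 0) : SDP A) * T = ((g, c) : SDP A) := hb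
        have hcomp : 𝕋 (b 0) • f 0 + 𝕋 (b 0) • T.1 = g ∧ b 0 + T.2 = c := by
          have h2 := h1
          rw [SDP.mul_def, SDP.mul_def] at h2
          have e1 := congrArg Prod.fst h2
          have e2 := congrArg Prod.snd h2
          simp only at e1 e2
          constructor
          · simpa [smul_zero, add_assoc] using e1
          · simpa using e2
        have hT1 : T.1 = 𝕋 (-b 0) • g - f 0 := by
          have := hcomp.1
          have : 𝕋 (-b 0) • (𝕋 (b 0) • f 0 + 𝕋 (b 0) • T.1) = 𝕋 (-b 0) • g := by
            rw [this]
          rw [smul_add, T_smul_T, T_smul_T, neg_add_cancel, T_zero, one_smul,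
            one_smul] at this
          linear_combination (norm := abel) this
        have hT2 : T.2 = c - b 0 := by omega
        have hTeq : T = ((𝕋 (-b 0) • g - f 0, c - b 0) : SDP A) :=
          Prod.ext hT1 hT2
        exact hTeq
      -- apply the induction hypothesis
      obtain ⟨z', hz'⟩ := (ih (fun i => f i.succ) (𝕋 (-b 0) • g - f 0) (c - b 0)).mp
        ⟨b', htail⟩
      refine ⟨Fin.cases (b 0) (fun i => b 0 + z' i), ?_⟩
      rw [Fin.sum_univ_succ]
      simp only [Fin.cases_zero, Fin.cases_succ]
      have : ∀ i : Fin n, 𝕋 (b 0 + z' i) • f i.succ = 𝕋 (b 0) • 𝕋 (z' i) • f i.succ := by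
        intro i; rw [T_smul_T]
      rw [Finset.sum_congr rfl fun i _ => this i, ← Finset.smul_sum, hz',
        smul_sub, T_smul_T, add_neg_cancel, T_zero, one_smul]
      abel
    · rintro ⟨z, hz⟩
      -- build the tail solution via the induction hypothesis
      have htgt : ∑ i : Fin n, 𝕋 (z i.succ - z 0) • f i.succ
          = 𝕋 (-z 0) • g - f 0 := by
        have h1 : ∀ i : Fin n, 𝕋 (z i.succ - z 0) • f i.succ
            = 𝕋 (-z 0) • 𝕋 (z i.succ) • f i.succ := by
          intro i; rw [T_smul_T]; ring_nf
        rw [Finset.sum_congr rfl fun i _ => h1 i, ← Finset.smul_sum]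
        have h2 : ∑ i : Fin n, 𝕋 (z i.succ) • f i.succ = g - 𝕋 (z 0) • f 0 := by
          have := hz
          rw [Fin.sum_univ_succ] at this
          linear_combination (norm := abel) this
        rw [h2, smul_sub, T_smul_T, neg_add_cancel, T_zero, one_smul]
      obtain ⟨b', hbt⟩ := (ih (fun i => f i.succ) (𝕋 (-z 0) • g - f 0) (c - z 0)).mpr
        ⟨fun i => z i.succ - z 0, htgt⟩
      refine ⟨Fin.cases (z 0) b', ?_⟩
      rw [List.ofFn_succ, List.prod_cons, mul_assoc]
      show (((0 : A), z 0) : SDP A) * ((f 0, 0) : SDP A)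
          * ((List.ofFn fun i : Fin n =>
              (((0 : A), b' i.castSucc) : SDP A) * ((f i.succ, 0) : SDP A)).prod
            * (((0 : A), b' (Fin.last n)) : SDP A)) = ((g, c) : SDP A)
      rw [hbt]
      rw [SDP.mul_def, SDP.mul_def]
      refine Prod.ext ?_ ?_
      · show (0 : A) + 𝕋 (z 0) • f 0 + 𝕋 (z 0 + 0) • (𝕋 (-z 0) • g - f 0) = g
        rw [add_zero, smul_sub, T_smul_T, add_neg_cancel, T_zero, one_smul]
        abel
      · show z 0 + (0 : ℤ) + (c - z 0) = c
        ring

/-- The equation `(0,b1)·h1·(0,b2)·h2 ⋯ (0,bn)·hn·(0,b_{n+1}) = (f0, 0)` with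
`hi = (fi, 0)` has an integer solution `b1, …, b_{n+1}` iff
`X^{z1}·f1 + ⋯ + X^{zn}·fn = f0` has an integer solution. -/
theorem knapsack_eq_iff_monomial_eq (n : ℕ) (f : Fin n → A) (f0 : A) :
    (∃ b : Fin (n + 1) → ℤ,
      (List.ofFn fun i : Fin n =>
          (((0 : A), b i.castSucc) : SDP A) * ((f i, 0) : SDP A)).prod
        * (((0 : A), b (Fin.last n)) : SDP A) = ((f0, 0) : SDP A))
    ↔ ∃ z : Fin n → ℤ, ∑ i, 𝕋 (z i) • f i = f0 :=
  key n f f0 0
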